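/- arXiv:1905.06657 — 2 statements merged into one kernel-verified Lean document; each statement's English description precedes it below -/
import Mathlib

section
/- If μ is absolutely continuous with respect to Lebesgue measure, μ_n ⇀ μ weakly, and there exists a stagnating sequence of transportation maps T_n (i.e. (T_n)_# μ = μ_n and ∫|x − T_n(x)|^q dμ → 0) with ∫ |f(x) − f_n(T_n(x))|^q dμ(x) → 0, then (μ_n, f_n) → (μ, f) in the TL^q metric. -/
open MeasureTheory Filter Topology

/-! Pushing `μ` forward along `x ↦ (T_n x, x)` gives a coupling of `μ_n` and `μ` whose
`TL^q` cost is `∫ |x - T_n x|^q dμ + ∫ |f - f_n ∘ T_n|^q dμ`. Hence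
`d_{TL^q}((μ_n, f_n), (μ, f))` lies between `0` and the `q`-th root of a null sequence. -/

/-- The set of couplings (transportation plans) between two measures on `ℝ/Lℤ`. -/
def couplings (L : ℝ) (μ ν : Measure (AddCircle L)) :
    Set (Measure (AddCircle L × AddCircle L)) :=
  {π | IsProbabilityMeasure π ∧ π.map Prod.fst = μ ∧ π.map Prod.snd = ν}

/-- The `TL^q` transportation distance between `(μ,f)` and `(ν,g)`. -/
noncomputable def dTL (L q : ℝ) (μ ν : Measure (AddCircle L))
    (f g : AddCircle L → ℝ) : ℝ :=
  sInf {r : ℝ | ∃ π ∈ couplings L μ ν,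
    r = (∫ z : AddCircle L × AddCircle L,
      (‖z.1 - z.2‖ ^ q + |f z.1 - g z.2| ^ q) ∂π) ^ (1 / q)}

/-- Weak convergence of measures on the circle. -/
def WeakConv (L : ℝ) (μn : ℕ → Measure (AddCircle L)) (μ : Measure (AddCircle L)) : Prop :=
  ∀ φ : AddCircle L → ℝ, Continuous φ →
    Tendsto (fun n => ∫ x, φ x ∂(μn n)) atTop (𝓝 (∫ x, φ x ∂μ))

section GraphCoupling

variable {α β : Type*} [MeasurableSpace α] [MeasurableSpace β] {μ : Measure α} {T : α → β}

lemma MeasureTheory.Measure.map_fst_map_graph (hT : Measurable T) :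
    (μ.map fun x => (T x, x)).map Prod.fst = μ.map T := by
  rw [Measure.map_map measurable_fst (hT.prodMk measurable_id : Measurable fun x => (T x, x))]
  rfl

lemma MeasureTheory.Measure.map_snd_map_graph (hT : Measurable T) :
    (μ.map fun x => (T x, x)).map Prod.snd = μ := by
  rw [Measure.map_map measurable_snd (hT.prodMk measurable_id : Measurable fun x => (T x, x))]
  exact Measure.map_id

end GraphCoupling

section TransportCost

variable {L q : ℝ} {μ ν : Measure (AddCircle L)} {f g : AddCircle L → ℝ}

lemma integral_transport_cost_rpow_nonneg (π : Measure (AddCircle L × AddCircle L)) :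
    0 ≤ (∫ z, (‖z.1 - z.2‖ ^ q + |f z.1 - g z.2| ^ q) ∂π) ^ (1 / q) :=
  Real.rpow_nonneg (integral_nonneg fun _ => by positivity) _

lemma dTL_nonneg : 0 ≤ dTL L q μ ν f g :=
  Real.sInf_nonneg <| by
    rintro r ⟨π, -, rfl⟩
    exact integral_transport_cost_rpow_nonneg π

lemma dTL_le_of_mem_couplings {π : Measure (AddCircle L × AddCircle L)}
    (hπ : π ∈ couplings L μ ν) :
    dTL L q μ ν f g ≤ (∫ z, (‖z.1 - z.2‖ ^ q + |f z.1 - g z.2| ^ q) ∂π) ^ (1 / q) := by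
  refine csInf_le ⟨0, ?_⟩ ⟨π, hπ, rfl⟩
  rintro r ⟨π', -, rfl⟩
  exact integral_transport_cost_rpow_nonneg π'

lemma map_graph_mem_couplings [IsProbabilityMeasure μ] {T : AddCircle L → AddCircle L}
    (hT : Measurable T) : μ.map (fun x => (T x, x)) ∈ couplings L (μ.map T) μ :=
  ⟨Measure.isProbabilityMeasure_map (hT.prodMk measurable_id).aemeasurable,
    Measure.map_fst_map_graph hT, Measure.map_snd_map_graph hT⟩

lemma integral_map_graph_transport_cost {T : AddCircle L → AddCircle L} (hT : Measurable T)
    (hf : AEStronglyMeasurable f μ) (hg : AEStronglyMeasurable g (μ.map T)) :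
    ∫ z, (‖z.1 - z.2‖ ^ q + |g z.1 - f z.2| ^ q) ∂(μ.map fun x => (T x, x)) =
      ∫ x, (‖x - T x‖ ^ q + |f x - g (T x)| ^ q) ∂μ := by
  have hgraph : Measurable fun x => (T x, x) := hT.prodMk measurable_id
  have hg₁ : AEMeasurable (fun z : AddCircle L × AddCircle L => g z.1)
      (μ.map fun x => (T x, x)) :=
    ((Measure.map_fst_map_graph (μ := μ) hT).symm ▸ hg).aemeasurable.comp_aemeasurable
      measurable_fst.aemeasurable
  have hf₂ : AEMeasurable (fun z : AddCircle L × AddCircle L => f z.2)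
      (μ.map fun x => (T x, x)) :=
    ((Measure.map_snd_map_graph (μ := μ) hT).symm ▸ hf).aemeasurable.comp_aemeasurable
      measurable_snd.aemeasurable
  have hcost : AEMeasurable (fun z : AddCircle L × AddCircle L =>
      ‖z.1 - z.2‖ ^ q + |g z.1 - f z.2| ^ q) (μ.map fun x => (T x, x)) :=
    ((measurable_fst.sub measurable_snd).norm.aemeasurable.pow_const q).add
      ((hg₁.sub hf₂).abs.pow_const q)
  rw [integral_map hgraph.aemeasurable hcost.aestronglyMeasurable]
  simp only [norm_sub_rev (T _), abs_sub_comm (g (T _))]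

lemma integrable_norm_sub_rpow [Fact (0 < L)] [IsFiniteMeasure μ] (hq : 0 ≤ q)
    {T : AddCircle L → AddCircle L} (hT : Measurable T) :
    Integrable (fun x => ‖x - T x‖ ^ q) μ := by
  refine .of_bound ((measurable_id.sub hT).norm.pow_const q).aestronglyMeasurable
    ((|L| / 2) ^ q) (ae_of_all _ fun x => ?_)
  rw [Real.norm_of_nonneg (by positivity)]
  exact Real.rpow_le_rpow (norm_nonneg _)
    (AddCircle.norm_le_half_period L (Fact.out : 0 < L).ne') hq

lemma dTL_le_of_map_eq [Fact (0 < L)] [IsProbabilityMeasure μ] (hq : 0 < q)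
    (hf : MemLp f (ENNReal.ofReal q) μ) (hg : MemLp g (ENNReal.ofReal q) ν)
    {T : AddCircle L → AddCircle L} (hT : Measurable T) (hpush : μ.map T = ν) :
    dTL L q ν μ g f ≤
      ((∫ x, ‖x - T x‖ ^ q ∂μ) + ∫ x, |f x - g (T x)| ^ q ∂μ) ^ (1 / q) := by
  subst hpush
  have hgT : MemLp (g ∘ T) (ENNReal.ofReal q) μ :=
    (memLp_map_measure_iff hg.1 hT.aemeasurable).1 hg
  have hdiff : Integrable (fun x => |f x - g (T x)| ^ q) μ := by
    simpa [ENNReal.toReal_ofReal hq.le, Real.norm_eq_abs] using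
      (hf.sub hgT).integrable_norm_rpow (by simpa using hq) ENNReal.ofReal_ne_top
  calc dTL L q (μ.map T) μ g f
      ≤ (∫ z, (‖z.1 - z.2‖ ^ q + |g z.1 - f z.2| ^ q) ∂(μ.map fun x => (T x, x))) ^
          (1 / q) :=
        dTL_le_of_mem_couplings (map_graph_mem_couplings hT)
    _ = ((∫ x, ‖x - T x‖ ^ q ∂μ) + ∫ x, |f x - g (T x)| ^ q ∂μ) ^ (1 / q) := by
        rw [integral_map_graph_transport_cost hT hf.1 hg.1,
          integral_add (integrable_norm_sub_rpow hq.le hT) hdiff]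

end TransportCost

theorem stmt_3_general (L q : ℝ) [Fact (0 < L)] (hq : 1 ≤ q)
    (μ : Measure (AddCircle L)) (μn : ℕ → Measure (AddCircle L))
    (f : AddCircle L → ℝ) (fn : ℕ → AddCircle L → ℝ)
    (hμ : IsProbabilityMeasure μ)
    (hf : MemLp f (ENNReal.ofReal q) μ)
    (hfn : ∀ n, MemLp (fn n) (ENNReal.ofReal q) (μn n))
    (T : ℕ → AddCircle L → AddCircle L)
    (hTmeas : ∀ n, Measurable (T n))
    (hpush : ∀ n, μ.map (T n) = μn n)
    (hstag : Tendsto (fun n => ∫ x, ‖x - T n x‖ ^ q ∂μ) atTop (𝓝 0))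
    (hconv : Tendsto (fun n => ∫ x, |f x - fn n (T n x)| ^ q ∂μ) atTop (𝓝 0)) :
    Tendsto (fun n => dTL L q (μn n) μ (fn n) f) atTop (𝓝 0) := by
  have hq₀ : 0 < q := zero_lt_one.trans_le hq
  have hbound : Tendsto (fun n =>
      ((∫ x, ‖x - T n x‖ ^ q ∂μ) + ∫ x, |f x - fn n (T n x)| ^ q ∂μ) ^ (1 / q))
      atTop (𝓝 0) := by
    have hlim := (hstag.add hconv).rpow_const (Or.inr (one_div_pos.2 hq₀).le)
    rwa [add_zero, Real.zero_rpow (one_div_pos.2 hq₀).ne'] at hlim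
  exact squeeze_zero (fun _ => dTL_nonneg)
    (fun n => dTL_le_of_map_eq hq₀ hf (hfn n) (hTmeas n) (hpush n)) hbound

/-- If `μ ≪ Leb`, `μ_n ⇀ μ`, and there is a stagnating sequence of transportation
maps `T_n` with `∫ |f - f_n ∘ T_n|^q dμ → 0`, then `(μ_n,f_n) → (μ,f)` in `TL^q`. -/
theorem stmt_3 (L q : ℝ) [Fact (0 < L)] (hq : 1 ≤ q)
    (μ : Measure (AddCircle L)) (μn : ℕ → Measure (AddCircle L))
    (f : AddCircle L → ℝ) (fn : ℕ → AddCircle L → ℝ)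
    (hμ : IsProbabilityMeasure μ) (hμn : ∀ n, IsProbabilityMeasure (μn n))
    (hf : MemLp f (ENNReal.ofReal q) μ)
    (hfn : ∀ n, MemLp (fn n) (ENNReal.ofReal q) (μn n))
    (hac : μ ≪ MeasureTheory.volume)
    (hweak : WeakConv L μn μ)
    (T : ℕ → AddCircle L → AddCircle L)
    (hTmeas : ∀ n, Measurable (T n))
    (hpush : ∀ n, μ.map (T n) = μn n)
    (hstag : Tendsto (fun n => ∫ x, ‖x - T n x‖ ^ q ∂μ) atTop (𝓝 0))
    (hconv : Tendsto (fun n => ∫ x, |f x - fn n (T n x)| ^ q ∂μ) atTop (𝓝 0)) :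
    Tendsto (fun n => dTL L q (μn n) μ (fn n) f) atTop (𝓝 0) :=
  stmt_3_general L q hq μ μn f fn hμ hf hfn T hTmeas hpush hstag hconv
end

section
/- If a sequence of functions F_n on a metric space is such that F_n(x_n) → F(x) whenever x_n → x, then the F_n are asymptotically uniformly equicontinuous on compact sets: for every sequentially compact K and every ε > 0 there exists δ > 0 and N such that for all n ≥ N and all x, y ∈ K with d(x,y) < δ, |F_n(x) − F_n(y)| < ε. -/
open Filter Topology

/-- Along a strictly monotone sequence of indices, `Fn (ψ j) (u j) → F x₀`
whenever `u j → x₀`. Obtained by interpolating `u` into a full sequence. -/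
theorem stmt_8_aux {X : Type*} [MetricSpace X] (F : X → ℝ) (Fn : ℕ → X → ℝ)
    (h : ∀ (x : X) (xs : ℕ → X), Tendsto xs atTop (𝓝 x) →
      Tendsto (fun n => Fn n (xs n)) atTop (𝓝 (F x)))
    (ψ : ℕ → ℕ) (hψ : StrictMono ψ) (u : ℕ → X) (x₀ : X)
    (hu : Tendsto u atTop (𝓝 x₀)) :
    Tendsto (fun j => Fn (ψ j) (u j)) atTop (𝓝 (F x₀)) := by
  classical
  set zs : ℕ → X := fun m => if hm : ∃ j, ψ j = m then u hm.choose else x₀ with hzs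
  have hz : ∀ j, zs (ψ j) = u j := by
    intro j
    have hm : ∃ j', ψ j' = ψ j := ⟨j, rfl⟩
    have : hm.choose = j := hψ.injective hm.choose_spec
    simp [hzs, dif_pos hm, this]
  have hzt : Tendsto zs atTop (𝓝 x₀) := by
    rw [Metric.tendsto_atTop]
    intro ε hε
    obtain ⟨J, hJ⟩ := (Metric.tendsto_atTop.1 hu) ε hε
    refine ⟨ψ J, fun m hm => ?_⟩
    by_cases hex : ∃ j, ψ j = m
    · have h1 : ψ hex.choose = m := hex.choose_spec
      have h2 : J ≤ hex.choose := by
        by_contra hc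
        push_neg at hc
        have := hψ hc
        omega
      have := hJ _ h2
      simpa [hzs, dif_pos hex] using this
    · simp [hzs, dif_neg hex, hε]
  have := (h x₀ zs hzt).comp hψ.tendsto_atTop
  refine this.congr fun j => ?_
  simp [Function.comp, hz j]

/-- If `F_n(x_n) → F(x)` whenever `x_n → x` (with `F` continuous), then the `F_n`
are asymptotically uniformly equicontinuous on sequentially compact sets. -/
theorem stmt_8 {X : Type*} [MetricSpace X] (F : X → ℝ) (Fn : ℕ → X → ℝ)
    (hF : Continuous F)
    (h : ∀ (x : X) (xs : ℕ → X), Tendsto xs atTop (𝓝 x) →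
      Tendsto (fun n => Fn n (xs n)) atTop (𝓝 (F x))) :
    ∀ K : Set X, IsSeqCompact K → ∀ ε : ℝ, 0 < ε →
      ∃ δ : ℝ, 0 < δ ∧ ∃ N : ℕ, ∀ n ≥ N, ∀ x ∈ K, ∀ y ∈ K,
        dist x y < δ → |Fn n x - Fn n y| < ε := by
  intro K hK ε hε
  by_contra hcon
  push_neg at hcon
  -- at every scale `1/(k+1)` and beyond every index `m`, find a bad triple
  have key : ∀ (k m : ℕ), ∃ n x y, m < n ∧ x ∈ K ∧ y ∈ K ∧
      dist x y < 1/(k+1) ∧ ε ≤ |Fn n x - Fn n y| := by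
    intro k m
    obtain ⟨n, hn, x, hx, y, hy, hd, he⟩ := hcon (1/(k+1)) (by positivity) (m+1)
    exact ⟨n, x, y, by omega, hx, hy, hd, he⟩
  choose nf xf yf h1 h2 h3 h4 h5 using key
  -- recursively build strictly increasing indices
  set pm : ℕ → ℕ := fun k => Nat.rec 0 (fun j ih => nf j ih) k with hpm
  set ns : ℕ → ℕ := fun k => nf k (pm k) with hns
  set xs : ℕ → X := fun k => xf k (pm k) with hxs
  set ys : ℕ → X := fun k => yf k (pm k) with hys
  have hpm_succ : ∀ k, pm (k + 1) = ns k := fun k => rfl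
  have hns_mono : StrictMono ns := by
    apply strictMono_nat_of_lt_succ
    intro k
    have := h1 (k + 1) (pm (k + 1))
    rw [hpm_succ k] at this
    exact this
  -- extract a convergent subsequence of xs
  obtain ⟨x₀, hx₀K, φ, hφ, hconv⟩ := hK (fun k => h2 k (pm k))
  -- ys ∘ φ converges to the same limit
  have hdist : Tendsto (fun j => dist (xs (φ j)) (ys (φ j))) atTop (𝓝 0) := by
    apply squeeze_zero (fun j => dist_nonneg) (fun j => le_of_lt (h4 (φ j) (pm (φ j))))
    have : Tendsto (fun j : ℕ => 1 / ((j : ℝ) + 1)) atTop (𝓝 0) :=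
      tendsto_one_div_add_atTop_nhds_zero_nat
    apply squeeze_zero (fun j => by positivity) _ this
    intro j
    have hj : (j : ℝ) + 1 ≤ (φ j : ℝ) + 1 := by
      have h' : j ≤ φ j := hφ.le_apply
      have : (j : ℝ) ≤ (φ j : ℝ) := by exact_mod_cast h'
      linarith
    exact one_div_le_one_div_of_le (by positivity) hj
  have hyconv : Tendsto (fun j => ys (φ j)) atTop (𝓝 x₀) :=
    hconv.congr_dist hdist
  -- apply the auxiliary lemma along ψ = ns ∘ φ
  have hψ : StrictMono (fun j => ns (φ j)) := hns_mono.comp hφ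
  have hA := stmt_8_aux F Fn h _ hψ _ _ hconv
  have hB := stmt_8_aux F Fn h _ hψ _ _ hyconv
  have hsub : Tendsto (fun j => Fn (ns (φ j)) (xs (φ j)) - Fn (ns (φ j)) (ys (φ j)))
      atTop (𝓝 0) := by simpa using hA.sub hB
  have habs : Tendsto (fun j => |Fn (ns (φ j)) (xs (φ j)) - Fn (ns (φ j)) (ys (φ j))|)
      atTop (𝓝 0) := by simpa using hsub.abs
  have hev := (habs.eventually (eventually_lt_nhds hε)).exists
  obtain ⟨j, hj⟩ := hev
  exact absurd (h5 (φ j) (pm (φ j))) (not_le.2 hj)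
end
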